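/- Let H be the subgroup of the symplectic group Sp₆(𝔽₂) consisting of all block-diagonal matrices with blocks M and (M⁻¹)ᵀ for M ∈ GL₃(𝔽₂) (the image of the standard embedding GL₃(𝔽₂) ↪ Sp₆(𝔽₂)). Then the centralizer of H in Sp₆(𝔽₂) is trivial: the only element of Sp₆(𝔽₂) commuting with every element of H is the identity. (Combined with the isomorphism W(E₇) ≅ ℤ/2ℤ × Sp₆(𝔽₂), this shows that the centralizer of the subgroup PSL₂(𝔽₇) in the Weyl group W(E₇) is isomorphic to ℤ/2ℤ.) -/
import Mathlib

open Matrix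

/-- The standard embedding `GL₃(𝔽₂) → Mat₆(𝔽₂)`, `M ↦ fromBlocks M 0 0 (M⁻¹)ᵀ`. -/
def embed (M : GL (Fin 3) (ZMod 2)) :
    Matrix (Fin 3 ⊕ Fin 3) (Fin 3 ⊕ Fin 3) (ZMod 2) :=
  Matrix.fromBlocks (M : Matrix (Fin 3) (Fin 3) (ZMod 2)) 0 0
    ((M⁻¹ : GL (Fin 3) (ZMod 2)) : Matrix (Fin 3) (Fin 3) (ZMod 2))ᵀ

def glOf (m : Matrix (Fin 3) (Fin 3) (ZMod 2)) (h : m * m = 1) : GL (Fin 3) (ZMod 2) :=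
  ⟨m, m, h, h⟩

lemma embed_glOf (m : Matrix (Fin 3) (Fin 3) (ZMod 2)) (h : m * m = 1) :
    embed (glOf m h) = Matrix.fromBlocks m 0 0 mᵀ := rfl

/-- The centralizer in `Sp₆(𝔽₂)` of the image of the standard embedding
`GL₃(𝔽₂) ↪ Sp₆(𝔽₂)`, `M ↦ fromBlocks M 0 0 (M⁻¹)ᵀ`, is trivial: any symplectic
matrix commuting with all such block matrices is the identity.
(Hence the centralizer of `PSL₂(𝔽₇)` in `W(E₇) ≅ ℤ/2ℤ × Sp₆(𝔽₂)` is `ℤ/2ℤ`.) -/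
theorem stmt_13 (g : Matrix (Fin 3 ⊕ Fin 3) (Fin 3 ⊕ Fin 3) (ZMod 2))
    (hg : g ∈ Matrix.symplecticGroup (Fin 3) (ZMod 2))
    (hcomm : ∀ M : GL (Fin 3) (ZMod 2), g * embed M = embed M * g) :
    g = 1 := by
  have h01 := hcomm (glOf !![1,1,0;0,1,0;0,0,1] (by decide))
  rw [embed_glOf, show ((!![1,1,0;0,1,0;0,0,1] : Matrix (Fin 3) (Fin 3) (ZMod 2)))ᵀ = !![1,0,0;1,1,0;0,0,1] from by decide] at h01
  have h02 := hcomm (glOf !![1,0,1;0,1,0;0,0,1] (by decide))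
  rw [embed_glOf, show ((!![1,0,1;0,1,0;0,0,1] : Matrix (Fin 3) (Fin 3) (ZMod 2)))ᵀ = !![1,0,0;0,1,0;1,0,1] from by decide] at h02
  have h10 := hcomm (glOf !![1,0,0;1,1,0;0,0,1] (by decide))
  rw [embed_glOf, show ((!![1,0,0;1,1,0;0,0,1] : Matrix (Fin 3) (Fin 3) (ZMod 2)))ᵀ = !![1,1,0;0,1,0;0,0,1] from by decide] at h10
  have h12 := hcomm (glOf !![1,0,0;0,1,1;0,0,1] (by decide))
  rw [embed_glOf, show ((!![1,0,0;0,1,1;0,0,1] : Matrix (Fin 3) (Fin 3) (ZMod 2)))ᵀ = !![1,0,0;0,1,0;0,1,1] from by decide] at h12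
  have h20 := hcomm (glOf !![1,0,0;0,1,0;1,0,1] (by decide))
  rw [embed_glOf, show ((!![1,0,0;0,1,0;1,0,1] : Matrix (Fin 3) (Fin 3) (ZMod 2)))ᵀ = !![1,0,1;0,1,0;0,0,1] from by decide] at h20
  have h21 := hcomm (glOf !![1,0,0;0,1,0;0,1,1] (by decide))
  rw [embed_glOf, show ((!![1,0,0;0,1,0;0,1,1] : Matrix (Fin 3) (Fin 3) (ZMod 2)))ᵀ = !![1,0,0;0,1,1;0,0,1] from by decide] at h21
  have hA01 : g (Sum.inl 0) (Sum.inl 1) = 0 := by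
    have e := congrFun (congrFun h12 (Sum.inl 0)) (Sum.inl 2)
    simp [mul_apply, Fintype.sum_sum_type, Fin.sum_univ_three, fromBlocks, Matrix.vecHead, Matrix.vecTail] at e
    linear_combination e
  have hA02 : g (Sum.inl 0) (Sum.inl 2) = 0 := by
    have e := congrFun (congrFun h21 (Sum.inl 0)) (Sum.inl 1)
    simp [mul_apply, Fintype.sum_sum_type, Fin.sum_univ_three, fromBlocks, Matrix.vecHead, Matrix.vecTail] at e
    linear_combination e
  have hA10 : g (Sum.inl 1) (Sum.inl 0) = 0 := by
    have e := congrFun (congrFun h02 (Sum.inl 1)) (Sum.inl 2)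
    simp [mul_apply, Fintype.sum_sum_type, Fin.sum_univ_three, fromBlocks, Matrix.vecHead, Matrix.vecTail] at e
    linear_combination e
  have hA12 : g (Sum.inl 1) (Sum.inl 2) = 0 := by
    have e := congrFun (congrFun h20 (Sum.inl 1)) (Sum.inl 0)
    simp [mul_apply, Fintype.sum_sum_type, Fin.sum_univ_three, fromBlocks, Matrix.vecHead, Matrix.vecTail] at e
    linear_combination e
  have hA20 : g (Sum.inl 2) (Sum.inl 0) = 0 := by
    have e := congrFun (congrFun h01 (Sum.inl 2)) (Sum.inl 1)
    simp [mul_apply, Fintype.sum_sum_type, Fin.sum_univ_three, fromBlocks, Matrix.vecHead, Matrix.vecTail] at e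
    linear_combination e
  have hA21 : g (Sum.inl 2) (Sum.inl 1) = 0 := by
    have e := congrFun (congrFun h10 (Sum.inl 2)) (Sum.inl 0)
    simp [mul_apply, Fintype.sum_sum_type, Fin.sum_univ_three, fromBlocks, Matrix.vecHead, Matrix.vecTail] at e
    linear_combination e
  have hB00 : g (Sum.inl 0) (Sum.inr 0) = 0 := by
    have e := congrFun (congrFun h10 (Sum.inl 0)) (Sum.inr 1)
    simp [mul_apply, Fintype.sum_sum_type, Fin.sum_univ_three, fromBlocks, Matrix.vecHead, Matrix.vecTail] at e
    linear_combination e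
  have hB01 : g (Sum.inl 0) (Sum.inr 1) = 0 := by
    have e := congrFun (congrFun h21 (Sum.inl 0)) (Sum.inr 2)
    simp [mul_apply, Fintype.sum_sum_type, Fin.sum_univ_three, fromBlocks, Matrix.vecHead, Matrix.vecTail] at e
    linear_combination e
  have hB02 : g (Sum.inl 0) (Sum.inr 2) = 0 := by
    have e := congrFun (congrFun h12 (Sum.inl 0)) (Sum.inr 1)
    simp [mul_apply, Fintype.sum_sum_type, Fin.sum_univ_three, fromBlocks, Matrix.vecHead, Matrix.vecTail] at e
    linear_combination e
  have hB10 : g (Sum.inl 1) (Sum.inr 0) = 0 := by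
    have e := congrFun (congrFun h20 (Sum.inl 1)) (Sum.inr 2)
    simp [mul_apply, Fintype.sum_sum_type, Fin.sum_univ_three, fromBlocks, Matrix.vecHead, Matrix.vecTail] at e
    linear_combination e
  have hB11 : g (Sum.inl 1) (Sum.inr 1) = 0 := by
    have e := congrFun (congrFun h21 (Sum.inl 1)) (Sum.inr 2)
    simp [mul_apply, Fintype.sum_sum_type, Fin.sum_univ_three, fromBlocks, Matrix.vecHead, Matrix.vecTail] at e
    linear_combination e
  have hB12 : g (Sum.inl 1) (Sum.inr 2) = 0 := by
    have e := congrFun (congrFun h02 (Sum.inl 1)) (Sum.inr 0)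
    simp [mul_apply, Fintype.sum_sum_type, Fin.sum_univ_three, fromBlocks, Matrix.vecHead, Matrix.vecTail] at e
    linear_combination e
  have hB20 : g (Sum.inl 2) (Sum.inr 0) = 0 := by
    have e := congrFun (congrFun h10 (Sum.inl 2)) (Sum.inr 1)
    simp [mul_apply, Fintype.sum_sum_type, Fin.sum_univ_three, fromBlocks, Matrix.vecHead, Matrix.vecTail] at e
    linear_combination e
  have hB21 : g (Sum.inl 2) (Sum.inr 1) = 0 := by
    have e := congrFun (congrFun h01 (Sum.inl 2)) (Sum.inr 0)
    simp [mul_apply, Fintype.sum_sum_type, Fin.sum_univ_three, fromBlocks, Matrix.vecHead, Matrix.vecTail] at e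
    linear_combination e
  have hB22 : g (Sum.inl 2) (Sum.inr 2) = 0 := by
    have e := congrFun (congrFun h02 (Sum.inl 2)) (Sum.inr 0)
    simp [mul_apply, Fintype.sum_sum_type, Fin.sum_univ_three, fromBlocks, Matrix.vecHead, Matrix.vecTail] at e
    linear_combination e
  have hC00 : g (Sum.inr 0) (Sum.inl 0) = 0 := by
    have e := congrFun (congrFun h01 (Sum.inr 0)) (Sum.inl 1)
    simp [mul_apply, Fintype.sum_sum_type, Fin.sum_univ_three, fromBlocks, Matrix.vecHead, Matrix.vecTail] at e
    linear_combination e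
  have hC01 : g (Sum.inr 0) (Sum.inl 1) = 0 := by
    have e := congrFun (congrFun h12 (Sum.inr 0)) (Sum.inl 2)
    simp [mul_apply, Fintype.sum_sum_type, Fin.sum_univ_three, fromBlocks, Matrix.vecHead, Matrix.vecTail] at e
    linear_combination e
  have hC02 : g (Sum.inr 0) (Sum.inl 2) = 0 := by
    have e := congrFun (congrFun h21 (Sum.inr 0)) (Sum.inl 1)
    simp [mul_apply, Fintype.sum_sum_type, Fin.sum_univ_three, fromBlocks, Matrix.vecHead, Matrix.vecTail] at e
    linear_combination e
  have hC10 : g (Sum.inr 1) (Sum.inl 0) = 0 := by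
    have e := congrFun (congrFun h02 (Sum.inr 1)) (Sum.inl 2)
    simp [mul_apply, Fintype.sum_sum_type, Fin.sum_univ_three, fromBlocks, Matrix.vecHead, Matrix.vecTail] at e
    linear_combination e
  have hC11 : g (Sum.inr 1) (Sum.inl 1) = 0 := by
    have e := congrFun (congrFun h12 (Sum.inr 1)) (Sum.inl 2)
    simp [mul_apply, Fintype.sum_sum_type, Fin.sum_univ_three, fromBlocks, Matrix.vecHead, Matrix.vecTail] at e
    linear_combination e
  have hC12 : g (Sum.inr 1) (Sum.inl 2) = 0 := by
    have e := congrFun (congrFun h20 (Sum.inr 1)) (Sum.inl 0)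
    simp [mul_apply, Fintype.sum_sum_type, Fin.sum_univ_three, fromBlocks, Matrix.vecHead, Matrix.vecTail] at e
    linear_combination e
  have hC20 : g (Sum.inr 2) (Sum.inl 0) = 0 := by
    have e := congrFun (congrFun h01 (Sum.inr 2)) (Sum.inl 1)
    simp [mul_apply, Fintype.sum_sum_type, Fin.sum_univ_three, fromBlocks, Matrix.vecHead, Matrix.vecTail] at e
    linear_combination e
  have hC21 : g (Sum.inr 2) (Sum.inl 1) = 0 := by
    have e := congrFun (congrFun h10 (Sum.inr 2)) (Sum.inl 0)
    simp [mul_apply, Fintype.sum_sum_type, Fin.sum_univ_three, fromBlocks, Matrix.vecHead, Matrix.vecTail] at e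
    linear_combination e
  have hC22 : g (Sum.inr 2) (Sum.inl 2) = 0 := by
    have e := congrFun (congrFun h20 (Sum.inr 2)) (Sum.inl 0)
    simp [mul_apply, Fintype.sum_sum_type, Fin.sum_univ_three, fromBlocks, Matrix.vecHead, Matrix.vecTail] at e
    linear_combination e
  have hD01 : g (Sum.inr 0) (Sum.inr 1) = 0 := by
    have e := congrFun (congrFun h01 (Sum.inr 0)) (Sum.inr 0)
    simp [mul_apply, Fintype.sum_sum_type, Fin.sum_univ_three, fromBlocks, Matrix.vecHead, Matrix.vecTail] at e
    linear_combination e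
  have hD02 : g (Sum.inr 0) (Sum.inr 2) = 0 := by
    have e := congrFun (congrFun h02 (Sum.inr 0)) (Sum.inr 0)
    simp [mul_apply, Fintype.sum_sum_type, Fin.sum_univ_three, fromBlocks, Matrix.vecHead, Matrix.vecTail] at e
    linear_combination e
  have hD10 : g (Sum.inr 1) (Sum.inr 0) = 0 := by
    have e := congrFun (congrFun h10 (Sum.inr 1)) (Sum.inr 1)
    simp [mul_apply, Fintype.sum_sum_type, Fin.sum_univ_three, fromBlocks, Matrix.vecHead, Matrix.vecTail] at e
    linear_combination e
  have hD12 : g (Sum.inr 1) (Sum.inr 2) = 0 := by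
    have e := congrFun (congrFun h12 (Sum.inr 1)) (Sum.inr 1)
    simp [mul_apply, Fintype.sum_sum_type, Fin.sum_univ_three, fromBlocks, Matrix.vecHead, Matrix.vecTail] at e
    linear_combination e
  have hD20 : g (Sum.inr 2) (Sum.inr 0) = 0 := by
    have e := congrFun (congrFun h20 (Sum.inr 2)) (Sum.inr 2)
    simp [mul_apply, Fintype.sum_sum_type, Fin.sum_univ_three, fromBlocks, Matrix.vecHead, Matrix.vecTail] at e
    linear_combination e
  have hD21 : g (Sum.inr 2) (Sum.inr 1) = 0 := by
    have e := congrFun (congrFun h21 (Sum.inr 2)) (Sum.inr 2)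
    simp [mul_apply, Fintype.sum_sum_type, Fin.sum_univ_three, fromBlocks, Matrix.vecHead, Matrix.vecTail] at e
    linear_combination e
  have hAd1 : g (Sum.inl 0) (Sum.inl 0) = g (Sum.inl 1) (Sum.inl 1) := by
    have e := congrFun (congrFun h01 (Sum.inl 0)) (Sum.inl 1)
    simp [mul_apply, Fintype.sum_sum_type, Fin.sum_univ_three, fromBlocks, Matrix.vecHead, Matrix.vecTail] at e
    linear_combination e
  have hAd2 : g (Sum.inl 1) (Sum.inl 1) = g (Sum.inl 2) (Sum.inl 2) := by
    have e := congrFun (congrFun h12 (Sum.inl 1)) (Sum.inl 2)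
    simp [mul_apply, Fintype.sum_sum_type, Fin.sum_univ_three, fromBlocks, Matrix.vecHead, Matrix.vecTail] at e
    linear_combination e
  have hDd1 : g (Sum.inr 1) (Sum.inr 1) = g (Sum.inr 0) (Sum.inr 0) := by
    have e := congrFun (congrFun h01 (Sum.inr 1)) (Sum.inr 0)
    simp [mul_apply, Fintype.sum_sum_type, Fin.sum_univ_three, fromBlocks, Matrix.vecHead, Matrix.vecTail] at e
    linear_combination e
  have hDd2 : g (Sum.inr 2) (Sum.inr 2) = g (Sum.inr 1) (Sum.inr 1) := by
    have e := congrFun (congrFun h12 (Sum.inr 2)) (Sum.inr 1)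
    simp [mul_apply, Fintype.sum_sum_type, Fin.sum_univ_three, fromBlocks, Matrix.vecHead, Matrix.vecTail] at e
    linear_combination e
  rw [SymplecticGroup.mem_iff] at hg
  have eJ := congrFun (congrFun hg (Sum.inl 0)) (Sum.inr 0)
  simp [Matrix.J, mul_apply, transpose_apply, Fintype.sum_sum_type, Fin.sum_univ_three, fromBlocks,
    Matrix.vecHead, Matrix.vecTail,
    hB00, hB01, hB02, hC00, hC01, hC02, hA01, hA02, hD01, hD02] at eJ
  obtain ⟨ha, hd⟩ := eJ
  clear h01 h02 h10 h12 h20 h21 hcomm hg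
  ext i j
  rcases i with i | i <;> rcases j with j | j <;> fin_cases i <;> fin_cases j <;>
    simp_all [Matrix.one_apply]
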